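/- arXiv:1110.6376 — 2 statements merged into one kernel-verified Lean document; each statement's English description precedes it below -/
import Mathlib

section
/- Let G be a finite group with m conjugacy classes C_1,...,C_m, and let M = {a_1,...,a_m} be a subset of G such that a_i ∈ C_i for each i. Then M generates G. -/
/-- If a finite group `G` has `m` conjugacy classes and `M = {a₁,…,a_m}` is a subset
containing one representative `a_i` of each conjugacy class `C_i`, then `M` generates `G`. -/
theorem conjClass_representatives_generate {G : Type*} [Group G] [Finite G]
    (a : ConjClasses G → G) (ha : ∀ c : ConjClasses G, ConjClasses.mk (a c) = c) :
    Subgroup.closure (Set.range a) = ⊤ := by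
  set H := Subgroup.closure (Set.range a) with hH
  have haH : ∀ c, a c ∈ H := fun c => Subgroup.subset_closure ⟨c, rfl⟩
  -- the map F : (G ⧸ H) × H → G, (q, h) ↦ q.out * h * q.out⁻¹ is surjective
  set F : (G ⧸ H) × H → G := fun p => (p.1.out : G) * p.2 * p.1.out⁻¹ with hF
  have hsurj : Function.Surjective F := by
    intro g
    have h1 : ConjClasses.mk (a (ConjClasses.mk g)) = ConjClasses.mk g := ha _
    rw [ConjClasses.mk_eq_mk_iff_isConj, isConj_iff] at h1
    obtain ⟨c, hc⟩ := h1
    set q : G ⧸ H := QuotientGroup.mk c with hq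
    have hout : (QuotientGroup.mk q.out : G ⧸ H) = q := q.out_eq'
    have hk : q.out⁻¹ * c ∈ H := QuotientGroup.eq.mp (hout.trans hq)
    refine ⟨⟨q, ⟨q.out⁻¹ * c * a (ConjClasses.mk g) * (q.out⁻¹ * c)⁻¹, H.mul_mem (H.mul_mem hk (haH _)) (H.inv_mem hk)⟩⟩, ?_⟩
    simp only [hF]
    have : c = q.out * (q.out⁻¹ * c) := by group
    calc (q.out : G) * (q.out⁻¹ * c * a (ConjClasses.mk g) * (q.out⁻¹ * c)⁻¹) * q.out⁻¹
        = c * a (ConjClasses.mk g) * c⁻¹ := by group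
      _ = g := hc
  have hcard : Nat.card ((G ⧸ H) × H) = Nat.card G := by
    rw [Nat.card_prod]
    exact H.index_mul_card
  have hinj : Function.Injective F :=
    (Finite.injective_iff_surjective_of_equiv ((Finite.card_eq.mp hcard).some)).mpr hsurj
  have hsub : ∀ q₁ q₂ : G ⧸ H, q₁ = q₂ := by
    intro q₁ q₂
    have : F (q₁, 1) = F (q₂, 1) := by simp [hF]
    exact (Prod.ext_iff.mp (hinj this)).1
  have : H.index = 1 := by
    have : Subsingleton (G ⧸ H) := ⟨hsub⟩
    rw [Subgroup.index, Nat.card_eq_one_iff_unique]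
    exact ⟨this, ⟨QuotientGroup.mk 1⟩⟩
  exact Subgroup.index_eq_one.mp this
end

section
/- A subset X of a finite group G is a generating set if and only if every conjugacy class of G contains an element expressible as a finite product of elements of X and their inverses. -/
open MulAction

lemma aux_jordan {G : Type*} [Group G] [Finite G] (H : Subgroup G)
    (h : ∀ g : G, ∃ x : G, x ∈ H ∧ IsConj g x) : H = ⊤ := by
  classical
  have : Fintype G := Fintype.ofFinite G
  have hfix : ∀ g : G, 1 ≤ Fintype.card (fixedBy (G ⧸ H) g) := by
    intro g
    obtain ⟨x, hxH, ⟨c, hc⟩⟩ := h g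
    have hne : Nonempty (fixedBy (G ⧸ H) g) := by
      refine ⟨⟨QuotientGroup.mk ((c : G)⁻¹), ?_⟩⟩
      show g • (QuotientGroup.mk ((c : G)⁻¹) : G ⧸ H) = QuotientGroup.mk ((c : G)⁻¹)
      rw [MulAction.Quotient.smul_mk, QuotientGroup.eq]
      have hxe : x = (c : G) * g * (c : G)⁻¹ := by
        have h1 : (c : G) * g = x * (c : G) := hc.eq
        calc x = x * (c : G) * (c : G)⁻¹ := by group
          _ = (c : G) * g * (c : G)⁻¹ := by rw [← h1]
      have hx : (g • (c : G)⁻¹)⁻¹ * (c : G)⁻¹ = x⁻¹ := by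
        simp only [smul_eq_mul]; rw [hxe]; group
      rw [hx]; exact H.inv_mem hxH
    exact Fintype.card_pos
  have horb : Fintype.card (orbitRel.Quotient G (G ⧸ H)) = 1 := by
    rw [Fintype.card_eq_one_iff]
    obtain ⟨q⟩ : Nonempty (orbitRel.Quotient G (G ⧸ H)) := inferInstance
    refine ⟨q, fun y => ?_⟩
    induction y using Quotient.inductionOn' with
    | h y =>
      induction q using Quotient.inductionOn' with
      | h q => exact Quotient.sound' (mem_orbit_iff.mpr (exists_smul_eq G q y))
  have hb := MulAction.sum_card_fixedBy_eq_card_orbits_mul_card_group G (G ⧸ H)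
  rw [horb, one_mul] at hb
  have hone : Fintype.card (fixedBy (G ⧸ H) (1 : G)) = Fintype.card (G ⧸ H) :=
    Fintype.card_congr (Equiv.subtypeUnivEquiv fun x => one_smul G x)
  have hsum : Fintype.card (G ⧸ H) + (Fintype.card G - 1) ≤ Fintype.card G := by
    calc Fintype.card (G ⧸ H) + (Fintype.card G - 1)
        = Fintype.card (fixedBy (G ⧸ H) (1 : G)) + (Finset.univ.erase (1 : G)).card := by
          rw [hone, Finset.card_erase_of_mem (Finset.mem_univ _), Finset.card_univ]
      _ ≤ Fintype.card (fixedBy (G ⧸ H) (1 : G)) +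
            ∑ g ∈ Finset.univ.erase (1 : G), Fintype.card (fixedBy (G ⧸ H) g) := by
          gcongr
          rw [Finset.card_eq_sum_ones]
          exact Finset.sum_le_sum fun g _ => hfix g
      _ = ∑ g : G, Fintype.card (fixedBy (G ⧸ H) g) :=
          Finset.add_sum_erase Finset.univ (fun g => Fintype.card (fixedBy (G ⧸ H) g)) (Finset.mem_univ (1 : G))
      _ = Fintype.card G := hb
  have hle : Fintype.card (G ⧸ H) ≤ 1 := by
    have hGpos : 0 < Fintype.card G := Fintype.card_pos
    omega
  have hidx : H.index = 1 := by
    have hpos : 0 < Fintype.card (G ⧸ H) := Fintype.card_pos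
    rw [Subgroup.index, Nat.card_eq_fintype_card]
    omega
  exact Subgroup.index_eq_one.mp hidx

/-- A subset `X` of a finite group `G` generates `G` if and only if every conjugacy
class of `G` contains an element expressible as a finite product of elements of `X`
and their inverses (i.e. an element of the subgroup generated by `X`). -/
theorem generates_iff_meets_every_conjClass {G : Type*} [Group G] [Finite G] (X : Set G) :
    Subgroup.closure X = ⊤ ↔
      ∀ g : G, ∃ x : G, x ∈ Subgroup.closure X ∧ IsConj g x := by
  constructor
  · intro h g
    exact ⟨g, h ▸ Subgroup.mem_top g, IsConj.refl g⟩
  · intro h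
    exact aux_jordan _ h
end
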